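/- Let c ≥ 1 be real and ρ ∈ (0,1). Define r(u) = (u^{1+ρ} − (u−c)^{1+ρ} + ρ c^{1+ρ})/(c(1+ρ)) − u^ρ for u ≥ c. Then r(u) ≥ 0 for all u ≥ c. -/

import Mathlib

/-!
Since `r(c) = 0`, it suffices that `r` is nondecreasing on `[c, ∞)`. Its derivative is
`(u^ρ - (u - c)^ρ) / c - ρ u^(ρ-1)`, which is nonnegative because the concave function `x ↦ x^ρ`
lies below its tangent line at `u`: `(u - c)^ρ ≤ u^ρ - ρ c u^(ρ-1)` (Bernoulli's inequality).
-/

open Real Set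

noncomputable def parametricR (c ρ u : ℝ) : ℝ :=
  (u ^ (1 + ρ) - (u - c) ^ (1 + ρ) + ρ * c ^ (1 + ρ)) / (c * (1 + ρ)) - u ^ ρ

section

variable {c ρ u : ℝ}

theorem rpow_sub_le_rpow_sub_mul_rpow_sub_one (hρ0 : 0 ≤ ρ) (hρ1 : ρ ≤ 1) (hu : 0 < u)
    (hcu : c ≤ u) : (u - c) ^ ρ ≤ u ^ ρ - ρ * c * u ^ (ρ - 1) := by
  have bernoulli : (1 + -(c / u)) ^ ρ ≤ 1 + ρ * -(c / u) :=
    rpow_one_add_le_one_add_mul_self (by rw [neg_le_neg_iff]; exact (div_le_one hu).2 hcu)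
      hρ0 hρ1
  calc (u - c) ^ ρ = (1 + -(c / u)) ^ ρ * u ^ ρ := by
        rw [← mul_rpow (by rw [← sub_eq_add_neg, sub_nonneg]; exact (div_le_one hu).2 hcu)
          hu.le]
        congr 1
        field_simp
        ring
    _ ≤ (1 + ρ * -(c / u)) * u ^ ρ := by gcongr
    _ = u ^ ρ - ρ * c * u ^ (ρ - 1) := by
        rw [rpow_sub_one hu.ne']
        field_simp
        ring

theorem hasDerivAt_parametricR (hρ0 : 0 ≤ ρ) (hc : c ≠ 0) (hu : 0 < u) :
    HasDerivAt (parametricR c ρ) ((u ^ ρ - (u - c) ^ ρ) / c - ρ * u ^ (ρ - 1)) u := by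
  have hρ : 1 + ρ ≠ 0 := by positivity
  have hpow : HasDerivAt (fun x : ℝ => x ^ (1 + ρ)) ((1 + ρ) * u ^ ρ) u := by
    simpa using hasDerivAt_rpow_const (p := 1 + ρ) (Or.inl hu.ne')
  -- The exponent `1 + ρ ≥ 1` keeps this differentiable also where `x - c` vanishes.
  have hshift : HasDerivAt (fun x : ℝ => (x - c) ^ (1 + ρ)) ((1 + ρ) * (u - c) ^ ρ) u := by
    simpa [Function.comp_def] using ((hasDerivAt_rpow_const (x := u - c) (p := 1 + ρ)
      (Or.inr (by linarith))).comp u ((hasDerivAt_id u).sub_const c))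
  have hρpow : HasDerivAt (fun x : ℝ => x ^ ρ) (ρ * u ^ (ρ - 1)) u := by
    simpa using hasDerivAt_rpow_const (p := ρ) (Or.inl hu.ne')
  refine (((hpow.sub hshift).add_const (ρ * c ^ (1 + ρ))).div_const (c * (1 + ρ))).sub
    hρpow |>.congr_deriv ?_
  field_simp

theorem parametricR_self (hc : 0 < c) (hρ0 : 0 ≤ ρ) : parametricR c ρ c = 0 := by
  have hρ : 1 + ρ ≠ 0 := by positivity
  rw [parametricR, sub_self, zero_rpow hρ, rpow_add hc, rpow_one]
  field_simp
  ring

theorem monotoneOn_parametricR (hc : 0 < c) (hρ0 : 0 ≤ ρ) (hρ1 : ρ ≤ 1) :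
    MonotoneOn (parametricR c ρ) (Ici c) := by
  have hderiv : ∀ u ∈ Ici c, HasDerivAt (parametricR c ρ)
      ((u ^ ρ - (u - c) ^ ρ) / c - ρ * u ^ (ρ - 1)) u :=
    fun u hu => hasDerivAt_parametricR hρ0 hc.ne' (hc.trans_le hu)
  refine monotoneOn_of_deriv_nonneg (convex_Ici c)
    (fun u hu => (hderiv u hu).continuousAt.continuousWithinAt) ?_ ?_
  · rw [interior_Ici]
    exact fun u hu => (hderiv u (mem_Ici_of_Ioi hu)).differentiableAt.differentiableWithinAt
  · rw [interior_Ici]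
    intro u hu
    rw [(hderiv u (mem_Ici_of_Ioi hu)).deriv, sub_nonneg, le_div_iff₀ hc, le_sub_comm]
    linarith [rpow_sub_le_rpow_sub_mul_rpow_sub_one hρ0 hρ1 (hc.trans hu) hu.le]

end

/-- Nonnegativity of the parametric function r(u) for ρ ∈ (0,1) (Appendix E). -/
theorem parametric_nonneg_rho_lt_one (c ρ : ℝ) (hc : 1 ≤ c)
    (hρ0 : 0 < ρ) (hρ1 : ρ < 1) :
    ∀ u : ℝ, c ≤ u →
      0 ≤ (u ^ (1 + ρ) - (u - c) ^ (1 + ρ) + ρ * c ^ (1 + ρ)) / (c * (1 + ρ)) -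
          u ^ ρ := by
  intro u hu
  have hc0 : 0 < c := zero_lt_one.trans_le hc
  calc 0 = parametricR c ρ c := (parametricR_self hc0 hρ0.le).symm
    _ ≤ parametricR c ρ u :=
      monotoneOn_parametricR hc0 hρ0.le hρ1.le self_mem_Ici hu hu
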